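/- The plateau value of the Kaplan–Meier estimator, which under sufficient follow-up estimates the cure fraction, admits the IPCW representation η̂ := Ŝ(max_j x_j) = 1 − (1/n) Σ_{i : δ_i = 1} 1/Ĝ(x_i−). -/

import Mathlib

/-! Write `Y_i` for the number at risk at `x_i` and `Ŝ(t−)` for the left limit of `Ŝ`.
Ordering the failures by time, `1 − Ŝ(max x)` telescopes into `∑_{δ_i = 1} Ŝ(x_i−) / Y_i`.
The numbers at risk `Y_j` at the times `x_j < t` run through `Y(t) + 1, …, n`, so the product of
all factors `1 − 1/Y_j` over `x_j < t` collapses to `Y(t)/n`; splitting it by `δ_j` gives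
`Ŝ(t−) Ĝ(t−) = Y(t)/n`, hence `Ŝ(x_i−) / Y_i = 1 / (n Ĝ(x_i−))`. -/

open Finset

/-- Number at risk at time `u`: `Y(u) = #{j : x_j ≥ u}`. -/
noncomputable def atRisk {n : ℕ} (x : Fin n → ℝ) (u : ℝ) : ℕ :=
  (univ.filter fun j => u ≤ x j).card

/-- Kaplan–Meier estimator of the failure-time survival function:
`Ŝ(t) = ∏_{i : x_i ≤ t, δ_i = 1} (1 − 1/Y(x_i))`. -/
noncomputable def kmS {n : ℕ} (x : Fin n → ℝ) (δ : Fin n → Bool) (t : ℝ) : ℝ :=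
  ∏ i ∈ univ.filter (fun i => x i ≤ t ∧ δ i = true), (1 - 1 / (atRisk x (x i) : ℝ))

/-- Left limit of the Kaplan–Meier estimator of the censoring survival function:
`Ĝ(t−) = ∏_{i : x_i < t, δ_i = 0} (1 − 1/Y(x_i))`. -/
noncomputable def kmGminus {n : ℕ} (x : Fin n → ℝ) (δ : Fin n → Bool) (t : ℝ) : ℝ :=
  ∏ i ∈ univ.filter (fun i => x i < t ∧ δ i = false), (1 - 1 / (atRisk x (x i) : ℝ))

theorem Finset.prod_one_sub_ordered_of_injective {ι α R : Type*} [CommRing R] [LinearOrder α]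
    (s : Finset ι) (key : ι → α) (hkey : Function.Injective key) (f : ι → R) :
    ∏ i ∈ s, (1 - f i) = 1 - ∑ i ∈ s, f i * ∏ j ∈ s with key j < key i, (1 - f j) := by
  let : LinearOrder ι := LinearOrder.lift' key hkey
  convert prod_one_sub_ordered s f
  exact Iff.rfl

theorem natCast_mul_prod_Ioc_one_sub_one_div {K : Type*} [Field K] [CharZero K] {a b : ℕ}
    (hab : a ≤ b) : (b : K) * ∏ m ∈ Ioc a b, (1 - 1 / (m : K)) = a := by
  induction b, hab using Nat.le_induction with
  | base => simp
  | succ b hab ih =>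
    rw [prod_Ioc_succ_top hab, ← ih]
    field_simp
    push_cast
    ring

noncomputable def kmSminus {n : ℕ} (x : Fin n → ℝ) (δ : Fin n → Bool) (t : ℝ) : ℝ :=
  ∏ i ∈ univ.filter (fun i => x i < t ∧ δ i = true), (1 - 1 / (atRisk x (x i) : ℝ))

section
variable {n : ℕ} (x : Fin n → ℝ) (δ : Fin n → Bool)

theorem atRisk_lt_atRisk_of_lt {t : ℝ} {j : Fin n} (h : x j < t) :
    atRisk x t < atRisk x (x j) := by
  refine card_lt_card ⟨monotone_filter_right _ fun k _ hk => h.le.trans hk, fun hsub => ?_⟩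
  have := (mem_filter.1 (hsub (mem_filter.2 ⟨mem_univ j, le_rfl⟩))).2
  linarith

theorem atRisk_le (t : ℝ) : atRisk x t ≤ n :=
  (card_filter_le _ _).trans_eq (card_fin n)

theorem card_filter_lt_add_atRisk (t : ℝ) :
    #{j | x j < t} + atRisk x t = n := by
  rw [atRisk, add_comm]
  simpa [not_le] using card_filter_add_card_filter_not (s := univ) (fun j => t ≤ x j)

theorem injective_atRisk_comp (hx : Function.Injective x) :
    Function.Injective (fun j => atRisk x (x j)) := by
  intro j k hjk
  by_contra hne
  rcases (hx.ne hne).lt_or_gt with h | h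
  · exact (atRisk_lt_atRisk_of_lt x h).ne hjk.symm
  · exact (atRisk_lt_atRisk_of_lt x h).ne hjk

theorem image_atRisk_filter_lt (hx : Function.Injective x) (t : ℝ) :
    (univ.filter (x · < t)).image (fun j => atRisk x (x j)) = Ioc (atRisk x t) n := by
  refine eq_of_subset_of_card_le ?_ ?_
  · intro m hm
    obtain ⟨j, hj, rfl⟩ := mem_image.1 hm
    exact mem_Ioc.2 ⟨atRisk_lt_atRisk_of_lt x (mem_filter.1 hj).2, atRisk_le x _⟩
  · rw [card_image_of_injective _ (injective_atRisk_comp x hx), Nat.card_Ioc]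
    have := card_filter_lt_add_atRisk x t
    omega

theorem natCast_mul_prod_filter_lt_one_sub_one_div_atRisk (hx : Function.Injective x) (t : ℝ) :
    (n : ℝ) * ∏ j ∈ univ.filter (x · < t), (1 - 1 / (atRisk x (x j) : ℝ)) = atRisk x t := by
  rw [← prod_image (f := fun m : ℕ => 1 - 1 / (m : ℝ)) (injective_atRisk_comp x hx).injOn,
    image_atRisk_filter_lt x hx, natCast_mul_prod_Ioc_one_sub_one_div (atRisk_le x t)]


theorem natCast_mul_kmSminus_mul_kmGminus (hx : Function.Injective x) (t : ℝ) :
    (n : ℝ) * (kmSminus x δ t * kmGminus x δ t) = atRisk x t := by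
  rw [kmSminus, kmGminus, ← natCast_mul_prod_filter_lt_one_sub_one_div_atRisk x hx t,
    ← prod_filter_mul_prod_filter_not (univ.filter (x · < t)) (δ · = true)]
  simp only [filter_filter, Bool.not_eq_true]

theorem one_div_atRisk_mul_kmSminus (hx : Function.Injective x) (i : Fin n) :
    1 / (atRisk x (x i) : ℝ) * kmSminus x δ (x i) = 1 / n * (1 / kmGminus x δ (x i)) := by
  have hY : (0 : ℝ) < atRisk x (x i) :=
    Nat.cast_pos.2 (card_pos.2 ⟨i, mem_filter.2 ⟨mem_univ i, le_rfl⟩⟩)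
  have key := natCast_mul_kmSminus_mul_kmGminus x δ hx (x i)
  have hne : (n : ℝ) * (kmSminus x δ (x i) * kmGminus x δ (x i)) ≠ 0 := key ▸ hY.ne'
  simp only [ne_eq, mul_eq_zero, not_or] at hne
  obtain ⟨hn, -, hG⟩ := hne
  field_simp
  linarith

theorem kmS_of_forall_le {t : ℝ} (ht : ∀ j, x j ≤ t) :
    kmS x δ t = ∏ i ∈ univ.filter (δ · = true), (1 - 1 / (atRisk x (x i) : ℝ)) := by
  simp only [kmS, ht, true_and]

theorem kmS_eq_one_sub_sum_kmSminus (hx : Function.Injective x) {t : ℝ} (ht : ∀ j, x j ≤ t) :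
    kmS x δ t =
      1 - ∑ i ∈ univ.filter (δ · = true), 1 / (atRisk x (x i) : ℝ) * kmSminus x δ (x i) := by
  rw [kmS_of_forall_le x δ ht, prod_one_sub_ordered_of_injective _ x hx]
  simp only [kmSminus, filter_filter, and_comm]

end

theorem km_plateau_ipcw_general {n : ℕ}
    (x : Fin n → ℝ) (δ : Fin n → Bool)
    (hinj : Function.Injective x)
    (i0 : Fin n) (hmax : ∀ j, x j ≤ x i0) :
    kmS x δ (x i0)
      = 1 - (1 / n) * ∑ i ∈ univ.filter (fun i => δ i = true),
          1 / kmGminus x δ (x i) := by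
  rw [kmS_eq_one_sub_sum_kmSminus x δ hinj hmax, mul_sum]
  exact congrArg _ (sum_congr rfl fun i _ => one_div_atRisk_mul_kmSminus x δ hinj i)

/-- **IPCW representation of the Kaplan–Meier plateau (cure-fraction estimator):**
if `x_{i₀} = max_j x_j`, then `η̂ = Ŝ(x_{i₀}) = 1 − (1/n) Σ_{i : δ_i = 1} 1/Ĝ(x_i−)`. -/
theorem km_plateau_ipcw {n : ℕ} (hn : 0 < n)
    (x : Fin n → ℝ) (δ : Fin n → Bool)
    (hpos : ∀ i, 0 < x i) (hinj : Function.Injective x)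
    (i0 : Fin n) (hmax : ∀ j, x j ≤ x i0) :
    kmS x δ (x i0)
      = 1 - (1 / n) * ∑ i ∈ univ.filter (fun i => δ i = true),
          1 / kmGminus x δ (x i) :=
  km_plateau_ipcw_general x δ hinj i0 hmax
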